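/- Point-mass behavior: if α(x) = H_c(x - x₀) for some x₀ ∈ (a,b) and c ∈ ℝ (Heaviside function jump at x₀), then every bounded f on [a,b] is RDS integrable with respect to α and ∫_a^b f dα = f(x₀). -/

import Mathlib

open Set Filter Topology
open scoped Classical

noncomputable section

/-- A partition `a = x 0 < x 1 < ... < x n = b` of `[a,b]`. -/
structure RDSPartition (a b : ℝ) where
  n : ℕ
  x : ℕ → ℝ
  mono : ∀ i, i < n → x i < x (i + 1)
  first : x 0 = a
  last : x n = b

/-- Right limit `α(t+)`, with the convention `α(b+) = α(b)` at the right endpoint. -/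
def rLim (b : ℝ) (α : ℝ → ℝ) (t : ℝ) : ℝ :=
  if t < b then Function.rightLim α t else α t

/-- Left limit `α(t-)`, with the convention `α(a-) = α(a)` at the left endpoint. -/
def lLim (a : ℝ) (α : ℝ → ℝ) (t : ℝ) : ℝ :=
  if a < t then Function.leftLim α t else α t

/-- `α`-length of the singleton `{t}` inside `[a,b]`: `α(t+) - α(t-)`. -/
def muPt (a b : ℝ) (α : ℝ → ℝ) (t : ℝ) : ℝ :=
  rLim b α t - lLim a α t

/-- `α`-length of the open interval `(c,d)` inside `[a,b]`: `α(d-) - α(c+)`. -/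
def muIoo (a b : ℝ) (α : ℝ → ℝ) (c d : ℝ) : ℝ :=
  lLim a α d - rLim b α c

/-- `f` is a step function with respect to the partition `P`: it is constant on each
open subinterval `(x (i-1), x i)` of `P`. -/
def IsStepOn (a b : ℝ) (f : ℝ → ℝ) (P : RDSPartition a b) : Prop :=
  ∀ i, i < P.n → ∀ s ∈ Set.Ioo (P.x i) (P.x (i + 1)),
    f s = f ((P.x i + P.x (i + 1)) / 2)

/-- The RDS integral of a step function with respect to the partition `P`:
`Σ_{i=0}^n f(x_i) μ_α({x_i}) + Σ_{i=1}^n c_i μ_α(I_i)`. -/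
def stepInt (a b : ℝ) (α : ℝ → ℝ) (P : RDSPartition a b) (f : ℝ → ℝ) : ℝ :=
  (∑ i ∈ Finset.range (P.n + 1), f (P.x i) * muPt a b α (P.x i)) +
    ∑ i ∈ Finset.range P.n,
      f ((P.x i + P.x (i + 1)) / 2) * muIoo a b α (P.x i) (P.x (i + 1))

/-- Upper envelope: infimum of RDS step integrals of step functions above `f` on `[a,b]`. -/
def upperRDS (a b : ℝ) (α f : ℝ → ℝ) : ℝ :=
  sInf { r | ∃ (u : ℝ → ℝ) (P : RDSPartition a b), IsStepOn a b u P ∧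
    (∀ t ∈ Set.Icc a b, f t ≤ u t) ∧ r = stepInt a b α P u }

/-- Lower envelope: supremum of RDS step integrals of step functions below `f` on `[a,b]`. -/
def lowerRDS (a b : ℝ) (α f : ℝ → ℝ) : ℝ :=
  sSup { r | ∃ (v : ℝ → ℝ) (P : RDSPartition a b), IsStepOn a b v P ∧
    (∀ t ∈ Set.Icc a b, v t ≤ f t) ∧ r = stepInt a b α P v }

/-- RDS integrability with respect to an increasing integrator. -/
def RDSIntegrableInc (a b : ℝ) (α f : ℝ → ℝ) : Prop :=
  lowerRDS a b α f = upperRDS a b α f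

/-- The RDS integral with respect to an increasing integrator. -/
def RDSIntegralInc (a b : ℝ) (α f : ℝ → ℝ) : ℝ := upperRDS a b α f

/-- RDS integrability with respect to a BV integrator: some Jordan decomposition
into increasing functions works. -/
def RDSIntegrable (a b : ℝ) (α f : ℝ → ℝ) : Prop :=
  ∃ αp αm : ℝ → ℝ, MonotoneOn αp (Set.Icc a b) ∧ MonotoneOn αm (Set.Icc a b) ∧
    (∀ t ∈ Set.Icc a b, α t = αp t - αm t) ∧
    RDSIntegrableInc a b αp f ∧ RDSIntegrableInc a b αm f

/-- The RDS integral with respect to a BV integrator. -/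
def RDSIntegral (a b : ℝ) (α f : ℝ → ℝ) : ℝ :=
  if h : RDSIntegrable a b α f then
    RDSIntegralInc a b h.choose f - RDSIntegralInc a b h.choose_spec.choose f
  else 0

/-- `f` is bounded on `[a,b]`. -/
def BddOn (a b : ℝ) (f : ℝ → ℝ) : Prop :=
  ∃ M : ℝ, ∀ t ∈ Set.Icc a b, |f t| ≤ M

end


/-- The Heaviside function `H_c`: `0` for `x < 0`, `c` at `x = 0`, `1` for `x > 0`. -/
noncomputable def Heav (c : ℝ) (x : ℝ) : ℝ := if x < 0 then 0 else if x = 0 then c else 1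

/-!
Write `H_c(· - x₀)` as the difference of two increasing functions that are `0` left of `x₀`
and a constant `q ≥ 0` right of it. For such a jump `J`, `μ_J` vanishes on every node and every
open cell of a partition that does not contain `x₀`, while `u` equals `u(x₀)` on the cell that
does; so every step integral against `J` is `q · u(x₀)`, and both envelopes of `f` equal `q f(x₀)`.

`RDSIntegral` uses an arbitrary Jordan decomposition `α = A - B`. One-sided limits of increasing
functions are additive, so `∫ u dA = u(x₀) + ∫ u dB` for every step function `u`; squeezing the
upper envelope of `A` between those of `B` (for `f` and for `-f`) gives
`∫ f dA - ∫ f dB = f(x₀)`.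
-/

open Function

section OneSidedLimits

variable {α β : Type*} [LinearOrder α] [TopologicalSpace α] [OrderTopology α]
  [TopologicalSpace β] [T2Space β] {f g : α → β} {a : α}

theorem Function.leftLim_congr (h : f =ᶠ[𝓝[<] a] g) (ha : f a = g a) :
    leftLim f a = leftLim g a := by
  rcases (𝓝[<] a).eq_or_neBot with hbot | hne
  · rw [leftLim_eq_of_eq_bot f hbot, leftLim_eq_of_eq_bot g hbot, ha]
  by_cases hf : ∃ y, Tendsto f (𝓝[<] a) (𝓝 y)
  · obtain ⟨y, hy⟩ := hf
    rw [leftLim_eq_of_tendsto hy, leftLim_eq_of_tendsto (hy.congr' h)]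
  · have hg : ¬∃ y, Tendsto g (𝓝[<] a) (𝓝 y) := fun ⟨y, hy⟩ => hf ⟨y, hy.congr' h.symm⟩
    rw [leftLim_eq_of_not_tendsto f hf, leftLim_eq_of_not_tendsto g hg, ha]

theorem Function.rightLim_congr (h : f =ᶠ[𝓝[>] a] g) (ha : f a = g a) :
    rightLim f a = rightLim g a :=
  leftLim_congr (α := αᵒᵈ) h ha

end OneSidedLimits

theorem MonotoneOn.exists_monotone_eqOn_Icc {g : ℝ → ℝ} {a b : ℝ} (hg : MonotoneOn g (Icc a b)) :
    ∃ g' : ℝ → ℝ, Monotone g' ∧ EqOn g g' (Icc a b) := by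
  rcases (Icc a b).eq_empty_or_nonempty with h | h
  · exact ⟨id, monotone_id, by simp [h]⟩
  · have hab : a ≤ b := nonempty_Icc.1 h
    exact hg.exists_monotone_extension (hg.map_isLeast (isLeast_Icc hab)).bddBelow
      (hg.map_isGreatest (isGreatest_Icc hab)).bddAbove

theorem Finset.sum_range_succ_sub_add_sum_range_sub {G : Type*} [AddCommGroup G]
    (r l : ℕ → G) (n : ℕ) :
    ∑ i ∈ range (n + 1), (r i - l i) + ∑ i ∈ range n, (l (i + 1) - r i) = r n - l 0 := by
  induction n with
  | zero => simp
  | succ n ih =>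
    rw [sum_range_succ (fun i => r i - l i) (n + 1), sum_range_succ (fun i => l (i + 1) - r i) n,
      add_add_add_comm, ih]
    abel

namespace RDSPartition

variable {a b : ℝ} (P : RDSPartition a b)

theorem strictMonoOn_x : StrictMonoOn P.x (Iic P.n) :=
  strictMonoOn_Iic_of_lt_succ P.mono

theorem x_mem {i : ℕ} (hi : i ≤ P.n) : P.x i ∈ Icc a b := by
  have hmono := P.strictMonoOn_x.monotoneOn
  constructor
  · calc a = P.x 0 := P.first.symm
      _ ≤ P.x i := hmono (mem_Iic.2 (Nat.zero_le _)) hi (Nat.zero_le i)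
  · calc P.x i ≤ P.x P.n := hmono hi (mem_Iic.2 le_rfl) hi
      _ = b := P.last

theorem mid_mem_Ioo {i : ℕ} (hi : i < P.n) :
    (P.x i + P.x (i + 1)) / 2 ∈ Ioo (P.x i) (P.x (i + 1)) :=
  ⟨left_lt_add_div_two.2 (P.mono i hi), add_div_two_lt_right.2 (P.mono i hi)⟩

theorem Ioo_subset_Icc {i : ℕ} (hi : i < P.n) : Ioo (P.x i) (P.x (i + 1)) ⊆ Icc a b :=
  Ioo_subset_Icc_self.trans (Icc_subset_Icc (P.x_mem hi.le).1 (P.x_mem hi).2)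

def split {m : ℝ} (hm : m ∈ Ioo a b) : RDSPartition a b where
  n := 2
  x i := if i = 0 then a else if i = 1 then m else b
  mono i hi := by interval_cases i <;> simp [hm.1, hm.2]
  first := rfl
  last := rfl

end RDSPartition

section StepIntegral

variable {a b : ℝ} {g h : ℝ → ℝ} {t : ℝ}

theorem rLim_congr {g' : ℝ → ℝ} (hg : EqOn g g' (Icc a b)) (ht : t ∈ Icc a b) :
    rLim b g t = rLim b g' t := by
  unfold rLim
  split_ifs with htb
  · exact rightLim_congr (eventuallyEq_of_mem (Ioo_mem_nhdsGT htb)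
      fun s hs => hg ⟨ht.1.trans hs.1.le, hs.2.le⟩) (hg ht)
  · exact hg ht

theorem lLim_congr {g' : ℝ → ℝ} (hg : EqOn g g' (Icc a b)) (ht : t ∈ Icc a b) :
    lLim a g t = lLim a g' t := by
  unfold lLim
  split_ifs with hat
  · exact leftLim_congr (eventuallyEq_of_mem (Ioo_mem_nhdsLT hat)
      fun s hs => hg ⟨hs.1.le, hs.2.le.trans ht.2⟩) (hg ht)
  · exact hg ht

theorem rLim_add (hg : Monotone g) (hh : Monotone h) (b t : ℝ) :
    rLim b (g + h) t = rLim b g t + rLim b h t := by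
  unfold rLim
  split_ifs
  · exact rightLim_eq_of_tendsto ((hg.tendsto_rightLim t).add (hh.tendsto_rightLim t))
  · rfl

theorem lLim_add (hg : Monotone g) (hh : Monotone h) (a t : ℝ) :
    lLim a (g + h) t = lLim a g t + lLim a h t := by
  unfold lLim
  split_ifs
  · exact leftLim_eq_of_tendsto ((hg.tendsto_leftLim t).add (hh.tendsto_leftLim t))
  · rfl

theorem muPt_nonneg (hg : Monotone g) (a b t : ℝ) : 0 ≤ muPt a b g t := by
  have hr : g t ≤ rLim b g t := by
    unfold rLim; split_ifs
    exacts [hg.le_rightLim le_rfl, le_rfl]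
  have hl : lLim a g t ≤ g t := by
    unfold lLim; split_ifs
    exacts [hg.leftLim_le le_rfl, le_rfl]
  exact sub_nonneg.2 (hl.trans hr)

theorem muIoo_nonneg (hg : Monotone g) (a b : ℝ) {s t : ℝ} (hst : s < t) :
    0 ≤ muIoo a b g s t := by
  unfold muIoo lLim rLim
  split_ifs
  exacts [sub_nonneg.2 (hg.rightLim_le_leftLim hst), sub_nonneg.2 (hg.le_leftLim hst),
    sub_nonneg.2 (hg.rightLim_le hst), sub_nonneg.2 (hg hst.le)]

variable (P : RDSPartition a b) {u v : ℝ → ℝ}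

theorem stepInt_congr {g' : ℝ → ℝ} (hg : EqOn g g' (Icc a b)) (u : ℝ → ℝ) :
    stepInt a b g P u = stepInt a b g' P u := by
  unfold stepInt muPt muIoo
  congr 1 <;> refine Finset.sum_congr rfl fun i hi => ?_
  · have hi : i ≤ P.n := Nat.lt_succ_iff.1 (Finset.mem_range.1 hi)
    rw [rLim_congr hg (P.x_mem hi), lLim_congr hg (P.x_mem hi)]
  · have hi : i < P.n := Finset.mem_range.1 hi
    rw [rLim_congr hg (P.x_mem hi.le), lLim_congr hg (P.x_mem hi)]

theorem stepInt_add (hg : Monotone g) (hh : Monotone h) (u : ℝ → ℝ) :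
    stepInt a b (g + h) P u = stepInt a b g P u + stepInt a b h P u := by
  simp only [stepInt, muPt, muIoo, rLim_add hg hh, lLim_add hg hh, add_sub_add_comm, mul_add,
    Finset.sum_add_distrib]
  abel

theorem stepInt_neg (g u : ℝ → ℝ) : stepInt a b g P (-u) = -stepInt a b g P u := by
  simp only [stepInt, Pi.neg_apply, neg_mul, Finset.sum_neg_distrib, neg_add]

theorem stepInt_const (g : ℝ → ℝ) (M : ℝ) :
    stepInt a b g P (fun _ => M) = M * (g b - g a) := by
  rw [stepInt, ← Finset.mul_sum, ← Finset.mul_sum, ← mul_add]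
  congr 1
  refine (Finset.sum_range_succ_sub_add_sum_range_sub (fun i => rLim b g (P.x i))
    (fun i => lLim a g (P.x i)) P.n).trans ?_
  rw [P.last, P.first, rLim, lLim, if_neg (lt_irrefl b), if_neg (lt_irrefl a)]

theorem stepInt_mono (hg : Monotone g) (huv : ∀ t ∈ Icc a b, u t ≤ v t) :
    stepInt a b g P u ≤ stepInt a b g P v := by
  refine add_le_add (Finset.sum_le_sum fun i hi => ?_) (Finset.sum_le_sum fun i hi => ?_)
  · have hi : i ≤ P.n := Nat.lt_succ_iff.1 (Finset.mem_range.1 hi)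
    exact mul_le_mul_of_nonneg_right (huv _ (P.x_mem hi)) (muPt_nonneg hg a b _)
  · have hi : i < P.n := Finset.mem_range.1 hi
    exact mul_le_mul_of_nonneg_right (huv _ (P.Ioo_subset_Icc hi (P.mid_mem_Ioo hi)))
      (muIoo_nonneg hg a b (P.mono i hi))

end StepIntegral

theorem IsStepOn.neg {a b : ℝ} {u : ℝ → ℝ} {P : RDSPartition a b} (hu : IsStepOn a b u P) :
    IsStepOn a b (-u) P :=
  fun i hi s hs => by simp only [Pi.neg_apply, hu i hi s hs]

theorem isStepOn_update_split {a b m : ℝ} (hm : m ∈ Ioo a b) (K y : ℝ) :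
    IsStepOn a b (update (fun _ => K) m y) (RDSPartition.split hm) := by
  intro i hi s hs
  have hi2 : i < 2 := hi
  have hcell : m ∉ Ioo ((RDSPartition.split hm).x i) ((RDSPartition.split hm).x (i + 1)) := by
    interval_cases i <;> simp [RDSPartition.split]
  rw [update_of_ne (ne_of_mem_of_not_mem hs hcell),
    update_of_ne (ne_of_mem_of_not_mem ((RDSPartition.split hm).mid_mem_Ioo hi) hcell)]

theorem BddOn.neg {a b : ℝ} {f : ℝ → ℝ} (hf : BddOn a b f) : BddOn a b (-f) :=
  let ⟨M, hM⟩ := hf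
  ⟨M, fun t ht => (abs_neg (f t)).le.trans (hM t ht)⟩

section Envelopes

variable {a b : ℝ} {f g : ℝ → ℝ}

theorem upperRDS_congr {g' : ℝ → ℝ} (hg : EqOn g g' (Icc a b)) :
    upperRDS a b g f = upperRDS a b g' f := by
  simp only [upperRDS, stepInt_congr _ hg]

theorem lowerRDS_eq_neg_upperRDS_neg : lowerRDS a b g f = -upperRDS a b g (-f) := by
  rw [upperRDS, ← Real.sSup_neg, lowerRDS]
  congr 1
  ext r
  simp only [Set.mem_neg, Pi.neg_apply]
  constructor
  · rintro ⟨v, P, hv, hvf, rfl⟩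
    exact ⟨-v, P, hv.neg, fun t ht => neg_le_neg (hvf t ht), (stepInt_neg P g v).symm⟩
  · rintro ⟨u, P, hu, hfu, hr⟩
    refine ⟨-u, P, hu.neg, fun t ht => neg_le.1 (hfu t ht), ?_⟩
    rw [stepInt_neg, ← hr, neg_neg]

theorem lowerRDS_congr {g' : ℝ → ℝ} (hg : EqOn g g' (Icc a b)) :
    lowerRDS a b g f = lowerRDS a b g' f := by
  rw [lowerRDS_eq_neg_upperRDS_neg, lowerRDS_eq_neg_upperRDS_neg, upperRDS_congr hg]

theorem rdsIntegrableInc_congr {g' : ℝ → ℝ} (hg : EqOn g g' (Icc a b)) :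
    RDSIntegrableInc a b g f ↔ RDSIntegrableInc a b g' f := by
  rw [RDSIntegrableInc, RDSIntegrableInc, upperRDS_congr hg, lowerRDS_congr hg]

theorem upperRDS_le_stepInt (hg : Monotone g) (hf : BddOn a b f) {u : ℝ → ℝ}
    {P : RDSPartition a b} (hu : IsStepOn a b u P) (hfu : ∀ t ∈ Icc a b, f t ≤ u t) :
    upperRDS a b g f ≤ stepInt a b g P u := by
  obtain ⟨M, hM⟩ := hf
  refine csInf_le ⟨-M * (g b - g a), ?_⟩ ⟨u, P, hu, hfu, rfl⟩
  rintro _ ⟨v, Q, -, hfv, rfl⟩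
  rw [← stepInt_const Q]
  exact stepInt_mono Q hg fun t ht => (neg_le_of_abs_le (hM t ht)).trans (hfv t ht)

theorem le_upperRDS (P : RDSPartition a b) (hf : BddOn a b f) {r : ℝ}
    (h : ∀ (u : ℝ → ℝ) (Q : RDSPartition a b), IsStepOn a b u Q →
      (∀ t ∈ Icc a b, f t ≤ u t) → r ≤ stepInt a b g Q u) :
    r ≤ upperRDS a b g f := by
  obtain ⟨M, hM⟩ := hf
  refine le_csInf ⟨_, fun _ => M, P, fun _ _ _ _ => rfl,
    fun t ht => (le_abs_self _).trans (hM t ht), rfl⟩ ?_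
  rintro _ ⟨u, Q, hu, hfu, rfl⟩
  exact h u Q hu hfu

variable {A B : ℝ → ℝ} {x₀ : ℝ}

theorem add_upperRDS_le (hB : Monotone B) (P : RDSPartition a b) (hf : BddOn a b f)
    (hx₀ : x₀ ∈ Icc a b)
    (hAB : ∀ (Q : RDSPartition a b) (u : ℝ → ℝ), IsStepOn a b u Q →
      stepInt a b A Q u = u x₀ + stepInt a b B Q u) :
    f x₀ + upperRDS a b B f ≤ upperRDS a b A f :=
  le_upperRDS P hf fun u Q hu hfu => by
    rw [hAB Q u hu]
    exact add_le_add (hfu x₀ hx₀) (upperRDS_le_stepInt hB hf hu hfu)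

theorem upperRDS_sub_eq_of_stepInt_eq_add (hB : Monotone B) (P : RDSPartition a b)
    (hf : BddOn a b f) (hx₀ : x₀ ∈ Icc a b)
    (hIA : RDSIntegrableInc a b A f) (hIB : RDSIntegrableInc a b B f)
    (hAB : ∀ (Q : RDSPartition a b) (u : ℝ → ℝ), IsStepOn a b u Q →
      stepInt a b A Q u = u x₀ + stepInt a b B Q u) :
    upperRDS a b A f - upperRDS a b B f = f x₀ := by
  have hle := add_upperRDS_le hB P hf hx₀ hAB
  have hge := add_upperRDS_le hB P hf.neg hx₀ hAB
  rw [RDSIntegrableInc, lowerRDS_eq_neg_upperRDS_neg] at hIA hIB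
  rw [Pi.neg_apply] at hge
  linarith

end Envelopes

noncomputable def jump (x₀ p q t : ℝ) : ℝ :=
  if t < x₀ then 0 else if t = x₀ then p else q

section Jump

variable {a b x₀ p q t : ℝ}

theorem jump_of_lt (h : t < x₀) : jump x₀ p q t = 0 := if_pos h

theorem jump_of_gt (h : x₀ < t) : jump x₀ p q t = q := by
  rw [jump, if_neg h.not_gt, if_neg h.ne']

theorem jump_self : jump x₀ p q x₀ = p := by
  rw [jump, if_neg (lt_irrefl x₀), if_pos rfl]

theorem monotone_jump (hp : 0 ≤ p) (hpq : p ≤ q) : Monotone (jump x₀ p q) := by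
  intro s t hst
  unfold jump
  split_ifs <;> grind

theorem rLim_jump (hb : x₀ < b) (ht : t ≤ b) :
    rLim b (jump x₀ p q) t = if t < x₀ then 0 else q := by
  rcases ht.lt_or_eq with htb | rfl
  · rw [rLim, if_pos htb]
    apply rightLim_eq_of_tendsto
    split_ifs with h
    · exact tendsto_const_nhds.congr' (eventuallyEq_of_mem (Ioo_mem_nhdsGT h)
        fun s hs => (jump_of_lt hs.2).symm)
    · exact tendsto_const_nhds.congr' (eventuallyEq_of_mem self_mem_nhdsWithin
        fun s hs => (jump_of_gt ((not_lt.1 h).trans_lt hs)).symm)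
  · rw [rLim, if_neg (lt_irrefl _), jump_of_gt hb, if_neg hb.not_gt]

theorem lLim_jump (ha : a < x₀) (ht : a ≤ t) :
    lLim a (jump x₀ p q) t = if x₀ < t then q else 0 := by
  rcases ht.lt_or_eq with hat | rfl
  · rw [lLim, if_pos hat]
    apply leftLim_eq_of_tendsto
    split_ifs with h
    · exact tendsto_const_nhds.congr' (eventuallyEq_of_mem (Ioo_mem_nhdsLT h)
        fun s hs => (jump_of_gt hs.1).symm)
    · exact tendsto_const_nhds.congr' (eventuallyEq_of_mem self_mem_nhdsWithin
        fun s hs => (jump_of_lt ((mem_Iio.1 hs).trans_le (not_lt.1 h))).symm)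
  · rw [lLim, if_neg (lt_irrefl _), jump_of_lt ha, if_neg ha.not_gt]

theorem muPt_jump_of_ne (hx₀ : x₀ ∈ Ioo a b) (ht : t ∈ Icc a b) (h : t ≠ x₀) :
    muPt a b (jump x₀ p q) t = 0 := by
  rw [muPt, rLim_jump hx₀.2 ht.2, lLim_jump hx₀.1 ht.1]
  rcases h.lt_or_gt with h | h
  · rw [if_pos h, if_neg h.not_gt, sub_zero]
  · rw [if_neg h.not_gt, if_pos h, sub_self]

theorem muIoo_jump_of_notMem (hx₀ : x₀ ∈ Ioo a b) {s : ℝ} (hs : a ≤ s) (hst : s < t)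
    (ht : t ≤ b) (h : x₀ ∉ Ioo s t) : muIoo a b (jump x₀ p q) s t = 0 := by
  rw [muIoo, lLim_jump hx₀.1 (hs.trans hst.le), rLim_jump hx₀.2 (hst.le.trans ht)]
  rw [mem_Ioo, not_and_or, not_lt, not_lt] at h
  rcases h with h | h
  · rw [if_pos (h.trans_lt hst), if_neg h.not_gt, sub_self]
  · rw [if_neg h.not_gt, if_pos (hst.trans_le h), sub_self]

theorem stepInt_jump (hx₀ : x₀ ∈ Ioo a b) {P : RDSPartition a b} {u : ℝ → ℝ}
    (hu : IsStepOn a b u P) : stepInt a b (jump x₀ p q) P u = q * u x₀ := by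
  have hnode : ∀ i ≤ P.n, u (P.x i) * muPt a b (jump x₀ p q) (P.x i)
      = u x₀ * muPt a b (jump x₀ p q) (P.x i) := fun i hi => by
    by_cases h : P.x i = x₀
    · rw [h]
    · rw [muPt_jump_of_ne hx₀ (P.x_mem hi) h, mul_zero, mul_zero]
  have hcell : ∀ i < P.n, u ((P.x i + P.x (i + 1)) / 2) *
      muIoo a b (jump x₀ p q) (P.x i) (P.x (i + 1))
      = u x₀ * muIoo a b (jump x₀ p q) (P.x i) (P.x (i + 1)) := fun i hi => by
    by_cases h : x₀ ∈ Ioo (P.x i) (P.x (i + 1))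
    · rw [hu i hi x₀ h]
    · rw [muIoo_jump_of_notMem hx₀ (P.x_mem hi.le).1 (P.mono i hi) (P.x_mem hi).2 h,
        mul_zero, mul_zero]
  calc stepInt a b (jump x₀ p q) P u = stepInt a b (jump x₀ p q) P (fun _ => u x₀) := by
        unfold stepInt
        congr 1 <;> refine Finset.sum_congr rfl fun i hi => ?_
        exacts [hnode i (Nat.lt_succ_iff.1 (Finset.mem_range.1 hi)),
          hcell i (Finset.mem_range.1 hi)]
    _ = q * u x₀ := by
      rw [stepInt_const, jump_of_gt hx₀.2, jump_of_lt hx₀.1, sub_zero, mul_comm]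

variable {f : ℝ → ℝ}

theorem upperRDS_jump (hx₀ : x₀ ∈ Ioo a b) (hq : 0 ≤ q) (hf : BddOn a b f) :
    upperRDS a b (jump x₀ p q) f = q * f x₀ := by
  obtain ⟨M, hM⟩ := hf
  have hu := isStepOn_update_split hx₀ M (f x₀)
  have hfu : ∀ t ∈ Icc a b, f t ≤ update (fun _ => M) x₀ (f x₀) t := fun t ht => by
    rcases eq_or_ne t x₀ with rfl | h
    · rw [update_self]
    · rw [update_of_ne h]
      exact le_of_abs_le (hM t ht)
  refine IsLeast.csInf_eq ⟨⟨_, _, hu, hfu, ?_⟩, ?_⟩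
  · rw [stepInt_jump hx₀ hu, update_self]
  · rintro _ ⟨v, Q, hv, hfv, rfl⟩
    rw [stepInt_jump hx₀ hv]
    exact mul_le_mul_of_nonneg_left (hfv x₀ (Ioo_subset_Icc_self hx₀)) hq

theorem rdsIntegrableInc_jump (hx₀ : x₀ ∈ Ioo a b) (hq : 0 ≤ q) (hf : BddOn a b f) :
    RDSIntegrableInc a b (jump x₀ p q) f := by
  rw [RDSIntegrableInc, lowerRDS_eq_neg_upperRDS_neg, upperRDS_jump hx₀ hq hf.neg,
    upperRDS_jump hx₀ hq hf, Pi.neg_apply, mul_neg, neg_neg]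

end Jump

section Heaviside

variable {a b x₀ c : ℝ} {f A B : ℝ → ℝ}

theorem heav_sub_eq_jump_sub_jump (c x₀ t : ℝ) :
    Heav c (t - x₀) = jump x₀ (max c 0) (|c| + 1) t - jump x₀ (max (-c) 0) |c| t := by
  rcases lt_trichotomy t x₀ with h | rfl | h
  · rw [jump_of_lt h, jump_of_lt h, Heav, if_pos (sub_neg.2 h), sub_zero]
  · rw [jump_self, jump_self, sub_self, Heav, if_neg (lt_irrefl 0), if_pos rfl,
      max_zero_sub_max_neg_zero_eq_self]
  · rw [jump_of_gt h, jump_of_gt h, Heav, if_neg (sub_pos.2 h).not_gt,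
      if_neg (sub_pos.2 h).ne', add_sub_cancel_left]

theorem monotone_jump_max_abs_add_one : Monotone (jump x₀ (max c 0) (|c| + 1)) :=
  monotone_jump (le_max_right _ _) (max_le ((le_abs_self c).trans (by linarith))
    (by positivity))

theorem monotone_jump_max_neg_abs : Monotone (jump x₀ (max (-c) 0) |c|) :=
  monotone_jump (le_max_right _ _) (max_le (neg_le_abs c) (abs_nonneg c))

theorem rdsIntegrable_heav (hx₀ : x₀ ∈ Ioo a b) (hf : BddOn a b f) :
    RDSIntegrable a b (fun t => Heav c (t - x₀)) f :=
  ⟨_, _, monotone_jump_max_abs_add_one.monotoneOn _, monotone_jump_max_neg_abs.monotoneOn _,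
    fun t _ => heav_sub_eq_jump_sub_jump c x₀ t,
    rdsIntegrableInc_jump hx₀ (by positivity) hf, rdsIntegrableInc_jump hx₀ (abs_nonneg c) hf⟩

theorem stepInt_eq_add_of_sub_eq_heav (hx₀ : x₀ ∈ Ioo a b) (hA : Monotone A) (hB : Monotone B)
    (hAB : ∀ t ∈ Icc a b, Heav c (t - x₀) = A t - B t) {P : RDSPartition a b} {u : ℝ → ℝ}
    (hu : IsStepOn a b u P) : stepInt a b A P u = u x₀ + stepInt a b B P u := by
  have hsum : EqOn (A + jump x₀ (max (-c) 0) |c|) (B + jump x₀ (max c 0) (|c| + 1)) (Icc a b) :=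
    fun t ht => by
      have := heav_sub_eq_jump_sub_jump c x₀ t
      simp only [Pi.add_apply]
      linarith [hAB t ht]
  have := stepInt_congr P hsum u
  rw [stepInt_add P hA monotone_jump_max_neg_abs, stepInt_add P hB monotone_jump_max_abs_add_one,
    stepInt_jump hx₀ hu, stepInt_jump hx₀ hu] at this
  linarith

theorem upperRDS_sub_eq_of_sub_eq_heav (hx₀ : x₀ ∈ Ioo a b) (hf : BddOn a b f)
    (hA : MonotoneOn A (Icc a b)) (hB : MonotoneOn B (Icc a b))
    (hAB : ∀ t ∈ Icc a b, Heav c (t - x₀) = A t - B t)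
    (hIA : RDSIntegrableInc a b A f) (hIB : RDSIntegrableInc a b B f) :
    upperRDS a b A f - upperRDS a b B f = f x₀ := by
  obtain ⟨A', hA', hAA'⟩ := hA.exists_monotone_eqOn_Icc
  obtain ⟨B', hB', hBB'⟩ := hB.exists_monotone_eqOn_Icc
  rw [rdsIntegrableInc_congr hAA'] at hIA
  rw [rdsIntegrableInc_congr hBB'] at hIB
  rw [upperRDS_congr hAA', upperRDS_congr hBB']
  refine upperRDS_sub_eq_of_stepInt_eq_add hB' (.split hx₀) hf (Ioo_subset_Icc_self hx₀) hIA hIB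
    fun Q u hu => stepInt_eq_add_of_sub_eq_heav (c := c) hx₀ hA' hB' (fun t ht => ?_) hu
  rw [hAB t ht, hAA' ht, hBB' ht]

end Heaviside

theorem stmt17 (a b x₀ c : ℝ) (hx₀ : x₀ ∈ Set.Ioo a b) (f : ℝ → ℝ)
    (hf : BddOn a b f) :
    RDSIntegrable a b (fun t => Heav c (t - x₀)) f ∧
    RDSIntegral a b (fun t => Heav c (t - x₀)) f = f x₀ := by
  have hInt := rdsIntegrable_heav (c := c) hx₀ hf
  refine ⟨hInt, ?_⟩
  rw [RDSIntegral, dif_pos hInt]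
  obtain ⟨hA, hB, hAB, hIA, hIB⟩ := hInt.choose_spec.choose_spec
  exact upperRDS_sub_eq_of_sub_eq_heav hx₀ hf hA hB hAB hIA hIB
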